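/- arXiv:1506.03651 — 2 statements merged into one kernel-verified Lean document; each statement's English description precedes it below -/
import Mathlib

section
/- Suppose η is squarefree (equivalently, η has only simple complex roots). If f ∈ ℝ[x] satisfies f·p ∈ U for every p ∈ U, then the derivative f′ is divisible by η in ℝ[x]. -/
noncomputable section

/-- Physicists' Hermite polynomials indexed by naturals. -/
def hermN : ℕ → Polynomial ℝ
  | 0 => 1
  | 1 => Polynomial.C 2 * Polynomial.X
  | (n + 2) => Polynomial.C 2 * Polynomial.X * hermN (n + 1)
      - Polynomial.C (2 * ((n : ℝ) + 1)) * hermN n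

/-- Physicists' Hermite polynomials indexed by integers, `0` for negative index. -/
def Herm (n : ℤ) : Polynomial ℝ := if 0 ≤ n then hermN n.toNat else 0

/-- Hermite polynomial as a real function. -/
def H (n : ℤ) : ℝ → ℝ := fun x => (Herm n).eval x

/-- The Wronskian determinant of a finite family of functions. -/
def Wr {m : ℕ} (f : Fin m → ℝ → ℝ) (x : ℝ) : ℝ :=
  Matrix.det (Matrix.of fun i j : Fin m => iteratedDeriv (j : ℕ) (f i) x)

/-- `N = (Σ_{i=1}^l k_i) - l(l-1)/2`. -/
def Nval (k : ℕ → ℕ) (l : ℕ) : ℤ :=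
  (∑ i ∈ Finset.range l, (k (i + 1) : ℤ)) - (l * (l - 1) / 2 : ℕ)

/-- The Wronskian of a finite family of polynomials. -/
def WrP {m : ℕ} (f : Fin m → Polynomial ℝ) : Polynomial ℝ :=
  Matrix.det (Matrix.of fun i j : Fin m => (Polynomial.derivative)^[j.1] (f i))

/-- `η = Wr[H_{k 1}, …, H_{k l}]` as a polynomial. -/
def etaP (k : ℕ → ℕ) (l : ℕ) : Polynomial ℝ :=
  WrP (fun i : Fin l => Herm (k (i.1 + 1) : ℤ))

/-- The exceptional Hermite polynomial `ĥ(n) = Wr[H_{k 1},…,H_{k l}, H_{n+l-N}]`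
as a polynomial. -/
def hhatP (k : ℕ → ℕ) (l : ℕ) (n : ℤ) : Polynomial ℝ :=
  WrP (Fin.snoc (fun i : Fin l => Herm (k (i.1 + 1) : ℤ)) (Herm (n + l - Nval k l)))

/-- The degree set `I = {n : N - l ≤ n, n + l - N ∉ {k_1,…,k_l}}`. -/
def Iset (k : ℕ → ℕ) (l : ℕ) : Set ℤ :=
  {n | Nval k l - l ≤ n ∧ ∀ i, 1 ≤ i → i ≤ l → n + l - Nval k l ≠ (k i : ℤ)}

/-- `U`: the linear span of the exceptional Hermite polynomials. -/
def Uspan (k : ℕ → ℕ) (l : ℕ) : Submodule ℝ (Polynomial ℝ) :=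
  Submodule.span ℝ ((fun n => hhatP k l n) '' Iset k l)

/-! Over `ℂ`, `U` becomes the image of `g ↦ Wr[F, g]`, `F = (H_{k₁}, …, H_{k_l})`. At a simple root
`x` of `η = Wr[F]` the Wronskian matrix at `x` has a left null vector `b`; row reduction with `b`
shows that every `p ∈ U` satisfies `p(x) c' = p'(x) c`, where `c ≠ 0` and `c'` are the `b`-weighted
`l`-th and `(l+1)`-st derivatives of `F` at `x`. Applied to `p` and to `f p` this gives
`f'(x) p(x) = 0`, and `p = Wr[F, (X - x) ^ (l - 1)]` has `p(x) = -(l - 1)! η'(x) ≠ 0`. So every root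
of the separable polynomial `η` is a root of `f'`. -/

open Polynomial Matrix
open scoped Nat

namespace ExceptionalHermite

section Wronskian

variable {R : Type*} [CommRing R]

def wronskianMatrix {n : ℕ} (f : Fin n → R[X]) : Matrix (Fin n) (Fin n) R[X] :=
  of fun i j => derivative^[j] (f i)

theorem derivative_det {ι : Type*} [Fintype ι] [DecidableEq ι] (M : Matrix ι ι R[X]) :
    derivative M.det = ∑ j, (M.updateCol j fun i => derivative (M i j)).det := by
  simp only [det_apply, map_sum, Units.smul_def, map_zsmul, derivative_prod_finset,
    Finset.smul_sum]
  rw [Finset.sum_comm]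
  refine Finset.sum_congr rfl fun j _ => Finset.sum_congr rfl fun σ _ => ?_
  rw [← Finset.mul_prod_erase _ _ (Finset.mem_univ j), updateCol_self, mul_comm]
  congr 2
  exact Finset.prod_congr rfl fun i hi => (updateCol_ne (Finset.ne_of_mem_erase hi)).symm

/-- Differentiating column `j < n` of a Wronskian matrix reproduces column `j + 1`, so only the
last column contributes to the derivative of the determinant. -/
theorem derivative_det_wronskianMatrix {n : ℕ} (f : Fin (n + 1) → R[X]) :
    derivative (wronskianMatrix f).det =
      ((wronskianMatrix f).updateCol (Fin.last n) fun i => derivative^[n + 1] (f i)).det := by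
  rw [derivative_det, Fintype.sum_eq_single (Fin.last n)]
  · congr 2
    funext i
    exact (Function.iterate_succ_apply' _ _ _).symm
  intro j hj
  have hj' : (j : ℕ) + 1 < n + 1 := by
    have := Fin.val_lt_last hj
    omega
  apply det_zero_of_column_eq (i := j) (j := ⟨j + 1, hj'⟩) (Fin.ne_of_val_ne (by simp))
  intro i
  rw [updateCol_self, updateCol_ne (Fin.ne_of_val_ne (by simp))]
  exact (Function.iterate_succ_apply' _ _ _).symm

theorem wronskianMatrix_snoc {n : ℕ} (f : Fin n → R[X]) (g : R[X]) :
    wronskianMatrix (Fin.snoc f g) =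
      (wronskianMatrix (Fin.snoc f 0)).updateRow (Fin.last n) fun j => derivative^[j] g := by
  ext i j
  induction i using Fin.lastCases <;> simp [wronskianMatrix]

def wronskianWith {n : ℕ} (f : Fin n → R[X]) : R[X] →ₗ[R] R[X] where
  toFun g := (wronskianMatrix (Fin.snoc f g)).det
  map_add' g h := by
    simp only [wronskianMatrix_snoc _ (g + h), wronskianMatrix_snoc _ g,
      wronskianMatrix_snoc _ h, iterate_map_add, ← det_updateRow_add]
    rfl
  map_smul' r g := by
    change (wronskianMatrix (Fin.snoc f (r • g))).det = r • (wronskianMatrix (Fin.snoc f g)).det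
    rw [wronskianMatrix_snoc _ (r • g), wronskianMatrix_snoc _ g,
      smul_eq_C_mul (a := r) (p := det _), ← det_updateRow_smul]
    congr
    funext j
    simp [smul_eq_C_mul]

theorem wronskianWith_apply {n : ℕ} (f : Fin n → R[X]) (g : R[X]) :
    wronskianWith f g = (wronskianMatrix (Fin.snoc f g)).det :=
  rfl

theorem wronskianWith_self {n : ℕ} (f : Fin n → R[X]) (i : Fin n) : wronskianWith f (f i) = 0 :=
  det_zero_of_row_eq (Fin.castSucc_lt_last i).ne (by ext j; simp [wronskianMatrix])

theorem map_det_wronskianMatrix {S : Type*} [CommRing S] (ψ : R →+* S) {n : ℕ}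
    (f : Fin n → R[X]) :
    (wronskianMatrix f).det.map ψ = (wronskianMatrix fun i => (f i).map ψ).det := by
  rw [← coe_mapRingHom, RingHom.map_det]
  congr
  ext i j
  simp [wronskianMatrix, iterate_derivative_map]

theorem map_wronskianWith {S : Type*} [CommRing S] (ψ : R →+* S) {n : ℕ} (f : Fin n → R[X])
    (g : R[X]) :
    (wronskianWith f g).map ψ = wronskianWith (fun i => (f i).map ψ) (g.map ψ) := by
  rw [wronskianWith_apply, map_det_wronskianMatrix, wronskianWith_apply]
  congr
  exact Fin.comp_snoc (map ψ) f g

end Wronskian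

theorem det_updateRow_single {R : Type*} [CommRing R] {n : ℕ}
    (M : Matrix (Fin (n + 1)) (Fin (n + 1)) R) (i j : Fin (n + 1)) (u : R) :
    (M.updateRow i (Pi.single j u)).det =
      (-1) ^ (i + j : ℕ) * u * (M.submatrix i.succAbove j.succAbove).det := by
  have hsingle : Pi.single j u = u • Pi.single j (1 : R) := by
    rw [← Pi.single_smul', smul_eq_mul, mul_one]
  rw [hsingle, det_updateRow_smul, ← adjugate_apply, adjugate_fin_succ_eq_det_submatrix]
  ring

/-- Row reduction with the weights `b` turns `b i * M.det` and `b i * (M.updateCol j w).det` into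
`u` and `v` times the same `(i, j)` cofactor. -/
theorem det_mul_eq_det_updateCol_mul {K : Type*} [Field K] {n : ℕ}
    (M : Matrix (Fin (n + 1)) (Fin (n + 1)) K) (j : Fin (n + 1)) (w : Fin (n + 1) → K)
    {b : Fin (n + 1) → K} (hb : b ≠ 0) {u v : K} (hM : b ᵥ* M = Pi.single j u)
    (hMw : b ᵥ* M.updateCol j w = Pi.single j v) :
    M.det * v = (M.updateCol j w).det * u := by
  obtain ⟨i, hi⟩ := Function.ne_iff.mp hb
  have rowReduce : ∀ {A : Matrix (Fin (n + 1)) (Fin (n + 1)) K} {t : K}, b ᵥ* A = Pi.single j t →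
      b i * A.det = (-1) ^ (i + j : ℕ) * t * (A.submatrix i.succAbove j.succAbove).det := by
    intro A t hA
    rw [← smul_eq_mul, ← det_updateRow_sum, ← vecMul_eq_sum, hA, det_updateRow_single]
  have hM' := rowReduce hM
  have hMw' := rowReduce hMw
  rw [submatrix_updateCol_succAbove] at hMw'
  apply mul_left_cancel₀ hi
  linear_combination v * hM' - u * hMw'

section SimpleRoot

theorem eval_det_eq_det_map {R : Type*} [CommRing R] {ι : Type*} [Fintype ι] [DecidableEq ι]
    (M : Matrix ι ι R[X]) (x : R) : eval x M.det = (M.map (eval x)).det :=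
  RingHom.map_det (evalRingHom x) M

/-- Only the `m`-th derivative of `(X - C x) ^ m` survives at `x`, and its cofactor is the
derivative of the Wronskian. -/
theorem eval_wronskianWith_X_sub_C_pow {R : Type*} [CommRing R] {m : ℕ} (F : Fin (m + 1) → R[X])
    (x : R) :
    eval x (wronskianWith F ((X - C x) ^ m)) =
      -(m ! : R) * eval x (derivative (wronskianMatrix F).det) := by
  set M := (wronskianMatrix (Fin.snoc F ((X - C x) ^ m))).map (eval x)
  have hlast : M (Fin.last (m + 1)) = Pi.single (Fin.castSucc (Fin.last m)) (m ! : R) := by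
    ext j
    simp only [M, wronskianMatrix, map_apply, of_apply, Fin.snoc_last,
      iterate_derivative_X_sub_pow, nsmul_eq_mul, eval_mul, eval_natCast, eval_pow, eval_sub,
      eval_X, eval_C, sub_self, Pi.single_apply, Fin.ext_iff, Fin.val_castSucc, Fin.val_last]
    rcases lt_trichotomy (j : ℕ) m with h | h | h
    · simp [h.ne, zero_pow (Nat.sub_ne_zero_of_lt h)]
    · simp [h, Nat.descFactorial_self]
    · simp [h.ne', Nat.descFactorial_eq_zero_iff_lt.mpr h]
  have hminor : M.submatrix (Fin.last (m + 1)).succAbove (Fin.castSucc (Fin.last m)).succAbove =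
      ((wronskianMatrix F).updateCol (Fin.last m) fun i => derivative^[m + 1] (F i)).map
        (eval x) := by
    ext i j
    induction j using Fin.lastCases <;> simp [M, wronskianMatrix]
  rw [wronskianWith_apply, eval_det_eq_det_map]
  change M.det = _
  rw [← updateRow_eq_self M (Fin.last _), hlast,
    det_updateRow_single, hminor, derivative_det_wronskianMatrix, eval_det_eq_det_map]
  rw [Fin.val_last, Fin.val_castSucc, Fin.val_last,
    (show Odd (m + 1 + m) from ⟨m, by ring⟩).neg_one_pow]
  ring

variable {K : Type*} [Field K]

theorem exists_eval_wronskianWith_mul_eq {m : ℕ} (F : Fin (m + 1) → K[X]) {x : K}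
    (hW : eval x (wronskianMatrix F).det = 0)
    (hW' : eval x (derivative (wronskianMatrix F).det) ≠ 0) :
    ∃ c c' : K, c ≠ 0 ∧ ∀ g : K[X],
      eval x (wronskianWith F g) * c' = eval x (derivative (wronskianWith F g)) * c := by
  rw [eval_det_eq_det_map] at hW
  obtain ⟨b, hb, hbW⟩ := exists_vecMul_eq_zero_iff.mpr hW
  set jet : ℕ → K := fun d => ∑ i, b i * eval x (derivative^[d] (F i)) with hjet
  have jet_eq_zero (d : Fin (m + 1)) : jet d = 0 := by
    simpa [vecMul, dotProduct, wronskianMatrix] using congrFun hbW d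
  have hbW' : b ᵥ* ((wronskianMatrix F).updateCol (Fin.last m)
      fun i => derivative^[m + 1] (F i)).map (eval x) = Pi.single (Fin.last m) (jet (m + 1)) := by
    ext j
    induction j using Fin.lastCases with
    | last => simp [vecMul, dotProduct, hjet]
    | cast j => simpa [vecMul, dotProduct, wronskianMatrix] using jet_eq_zero j.castSucc
  refine ⟨jet (m + 1), jet (m + 2), fun hc => hW' ?_, fun g => ?_⟩
  · rw [derivative_det_wronskianMatrix, eval_det_eq_det_map]
    exact exists_vecMul_eq_zero_iff.mp ⟨b, hb, by rw [hbW', hc, Pi.single_zero]⟩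
  have hb' : (Fin.snoc b 0 : Fin (m + 2) → K) ≠ 0 := fun h =>
    hb (funext fun i => by simpa using congrFun h i.castSucc)
  rw [wronskianWith_apply, derivative_det_wronskianMatrix, eval_det_eq_det_map,
    eval_det_eq_det_map, map_updateCol]
  refine det_mul_eq_det_updateCol_mul _ _ _ hb' ?_ ?_ <;> ext j
  all_goals
    induction j using Fin.lastCases with
    | last => simp [vecMul, dotProduct, Fin.sum_univ_castSucc, wronskianMatrix, hjet]
    | cast j =>
      simpa [vecMul, dotProduct, Fin.sum_univ_castSucc, wronskianMatrix, hjet] using jet_eq_zero j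

theorem eval_derivative_eq_zero_of_mul_mem_range [CharZero K] {m : ℕ} (F : Fin m → K[X]) {x : K}
    (hW : eval x (wronskianMatrix F).det = 0)
    (hW' : eval x (derivative (wronskianMatrix F).det) ≠ 0) {f : K[X]}
    (hf : ∀ p ∈ LinearMap.range (wronskianWith F), f * p ∈ LinearMap.range (wronskianWith F)) :
    eval x (derivative f) = 0 := by
  rcases m with _ | m
  · simp [wronskianMatrix] at hW
  obtain ⟨c, c', hc, hrel⟩ := exists_eval_wronskianWith_mul_eq F hW hW'
  have hrange : ∀ p ∈ LinearMap.range (wronskianWith F),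
      eval x p * c' = eval x (derivative p) * c := by
    rintro _ ⟨g, rfl⟩
    exact hrel g
  set p := wronskianWith F ((X - C x) ^ m)
  have hp : eval x p ≠ 0 := by
    rw [eval_wronskianWith_X_sub_C_pow]
    exact mul_ne_zero (neg_ne_zero.mpr (Nat.cast_ne_zero.mpr m.factorial_ne_zero)) hW'
  have hp_rel := hrange p ⟨_, rfl⟩
  have hfp_rel := hrange (f * p) (hf p ⟨_, rfl⟩)
  simp only [derivative_mul, eval_mul, eval_add] at hfp_rel
  have hprod : eval x (derivative f) * (eval x p * c) = 0 := by
    linear_combination eval x f * hp_rel - hfp_rel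
  exact (mul_eq_zero.mp hprod).resolve_right (mul_ne_zero hp hc)

end SimpleRoot

theorem exists_eq_map_add_I_smul_map (g : ℂ[X]) :
    ∃ q₁ q₂ : ℝ[X], g = q₁.map (algebraMap ℝ ℂ) + Complex.I • q₂.map (algebraMap ℝ ℂ) := by
  induction g using Polynomial.induction_on' with
  | add g h hg hh =>
    obtain ⟨g₁, g₂, rfl⟩ := hg
    obtain ⟨h₁, h₂, rfl⟩ := hh
    exact ⟨g₁ + h₁, g₂ + h₂, by simp only [Polynomial.map_add, smul_add]; abel⟩
  | monomial n z =>
    refine ⟨monomial n z.re, monomial n z.im, ?_⟩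
    rw [map_monomial, map_monomial, smul_monomial, ← (monomial n).map_add]
    congr 1
    simp [Complex.ext_iff]

theorem mul_mem_range_wronskianWith_map {m : ℕ} {F : Fin m → ℝ[X]} {f : ℝ[X]}
    (hf : ∀ p ∈ LinearMap.range (wronskianWith F), f * p ∈ LinearMap.range (wronskianWith F)) :
    ∀ p ∈ LinearMap.range (wronskianWith fun i => (F i).map (algebraMap ℝ ℂ)),
      f.map (algebraMap ℝ ℂ) * p ∈
        LinearMap.range (wronskianWith fun i => (F i).map (algebraMap ℝ ℂ)) := by
  have hreal (q : ℝ[X]) : f.map (algebraMap ℝ ℂ) *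
      wronskianWith (fun i => (F i).map (algebraMap ℝ ℂ)) (q.map (algebraMap ℝ ℂ)) ∈
        LinearMap.range (wronskianWith fun i => (F i).map (algebraMap ℝ ℂ)) := by
    obtain ⟨q', hq'⟩ := hf _ ⟨q, rfl⟩
    exact ⟨q'.map (algebraMap ℝ ℂ), by
      rw [← map_wronskianWith, hq', Polynomial.map_mul, map_wronskianWith]⟩
  rintro _ ⟨g, rfl⟩
  obtain ⟨q₁, q₂, rfl⟩ := exists_eq_map_add_I_smul_map g
  rw [map_add, map_smul, mul_add, mul_smul_comm]
  exact add_mem (hreal q₁) (Submodule.smul_mem _ _ (hreal q₂))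

theorem _root_.Polynomial.Separable.dvd_of_forall_aeval_eq_zero {K L : Type*} [Field K] [Field L]
    [IsAlgClosed L] [Algebra K L] {p q : K[X]} (hp : p.Separable)
    (h : ∀ x : L, aeval x p = 0 → aeval x q = 0) : p ∣ q := by
  rcases eq_or_ne q 0 with rfl | hq
  · exact dvd_zero p
  rw [← map_dvd_map' (algebraMap K L)]
  refine (IsAlgClosed.splits _).dvd_of_roots_le_roots (map_ne_zero hp.ne_zero) ?_
  rw [Multiset.le_iff_subset (nodup_roots hp.map)]
  intro x hx
  rw [mem_roots (map_ne_zero hq), IsRoot, eval_map_algebraMap]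
  exact h x (by rw [← eval_map_algebraMap]; exact isRoot_of_mem_roots hx)

theorem degree_hermN : ∀ n, (hermN n).degree = n
  | 0 => by simp [hermN]
  | 1 => by simp [hermN]
  | n + 2 => by
    have hlead : (C 2 * X * hermN (n + 1)).degree = ↑(n + 2) := by
      rw [degree_mul, degree_C_mul_X two_ne_zero, degree_hermN (n + 1)]
      norm_cast
      omega
    have hlow : (C (2 * ((n : ℝ) + 1)) * hermN n).degree < ↑(n + 2) := by
      rw [degree_C_mul (by positivity), degree_hermN n]
      norm_cast
      omega
    rw [hermN, degree_sub_eq_left_of_degree_lt (hlead ▸ hlow), hlead]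

def hermSequence : Polynomial.Sequence ℝ :=
  ⟨hermN, degree_hermN⟩

theorem span_range_hermN : Submodule.span ℝ (Set.range hermN) = ⊤ :=
  hermSequence.span fun i => (leadingCoeff_ne_zero.mpr (hermSequence.ne_zero i)).isUnit

theorem Herm_natCast (m : ℕ) : Herm m = hermN m := by
  simp [Herm]

def hermiteRows (k : ℕ → ℕ) (l : ℕ) : Fin l → ℝ[X] :=
  fun i => Herm (k (i + 1))

theorem hhatP_eq (k : ℕ → ℕ) (l : ℕ) (n : ℤ) :
    hhatP k l n = wronskianWith (hermiteRows k l) (Herm (n + l - Nval k l)) :=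
  rfl

/-- `U` is the image of `q ↦ Wr[H_{k₁}, …, H_{k_l}, q]`: the `H_m` span `ℝ[X]`, and those
with `m ∈ {k₁, …, k_l}` contribute `0`. -/
theorem Uspan_eq_range (k : ℕ → ℕ) (l : ℕ) :
    Uspan k l = LinearMap.range (wronskianWith (hermiteRows k l)) := by
  rw [LinearMap.range_eq_map, ← span_range_hermN, Submodule.map_span, Uspan]
  apply le_antisymm <;> rw [Submodule.span_le]
  · rintro _ ⟨n, hn, rfl⟩
    obtain ⟨m, hm⟩ : ∃ m : ℕ, n + l - Nval k l = m :=
      ⟨_, (Int.toNat_of_nonneg (by linarith [hn.1])).symm⟩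
    exact Submodule.subset_span ⟨hermN m, ⟨m, rfl⟩, by dsimp only; rw [hhatP_eq, hm, Herm_natCast]⟩
  rintro _ ⟨_, ⟨m, rfl⟩, rfl⟩
  by_cases hm : ∃ i : Fin l, k (i + 1) = m
  · obtain ⟨i, hi⟩ := hm
    rw [SetLike.mem_coe, ← Herm_natCast, ← hi]
    exact (wronskianWith_self (hermiteRows k l) i).symm ▸ zero_mem _
  push Not at hm
  refine Submodule.subset_span ⟨m + Nval k l - l, ⟨by omega, fun i hi₁ hi₂ => ?_⟩, ?_⟩
  · have := hm ⟨i - 1, by omega⟩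
    rw [Nat.sub_add_cancel hi₁] at this
    omega
  · dsimp only
    rw [hhatP_eq, show (m : ℤ) + Nval k l - l + l - Nval k l = m by ring, Herm_natCast]

end ExceptionalHermite

open ExceptionalHermite

theorem stmt_12_general (l : ℕ) (k : ℕ → ℕ)
    (hsq : Squarefree (etaP k l))
    (f : Polynomial ℝ) (hf : ∀ p ∈ Uspan k l, f * p ∈ Uspan k l) :
    etaP k l ∣ Polynomial.derivative f := by
  have hsep : (etaP k l).Separable := PerfectField.separable_iff_squarefree.mpr hsq
  have hηC : (etaP k l).map (algebraMap ℝ ℂ) =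
      (wronskianMatrix fun i => (hermiteRows k l i).map (algebraMap ℝ ℂ)).det :=
    map_det_wronskianMatrix _ _
  rw [Uspan_eq_range] at hf
  refine hsep.dvd_of_forall_aeval_eq_zero (L := ℂ) fun x hx => ?_
  rw [← eval_map_algebraMap, ← derivative_map]
  refine eval_derivative_eq_zero_of_mul_mem_range _ ?_ ?_ (mul_mem_range_wronskianWith_map hf)
  · rw [← hηC, eval_map_algebraMap, hx]
  · rw [← hηC, derivative_map, eval_map_algebraMap]
    exact hsep.aeval_derivative_ne_zero hx

/-- If `η` is squarefree and `f` stabilizes `U`, then `η` divides `f'`. -/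
theorem stmt_12 (l : ℕ) (hl : 1 ≤ l) (k : ℕ → ℕ) (hk1 : 1 ≤ k 1)
    (hmono : ∀ i, 1 ≤ i → i < l → k i < k (i + 1))
    (hsq : Squarefree (etaP k l))
    (f : Polynomial ℝ) (hf : ∀ p ∈ Uspan k l, f * p ∈ Uspan k l) :
    etaP k l ∣ Polynomial.derivative f :=
  stmt_12_general l k hsq f hf
end
end

section
/- Fix an integer k ≥ 1 and let f(x) = H_{k+1}(x), A(y) = Wr[H_k, y], and B(y) = (y′ − 2x y)/H_k. Then for every smooth function y : ℝ → ℝ and every x ∈ ℝ with H_k(x) ≠ 0: B(f · A(y))(x) = H_{k+1}(x) y″(x) − H_{k+2}(x) y′(x) + 2k (H_{k+1}(x) − 2(k+1) H_{k−1}(x)) y(x). -/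
noncomputable section

/-- The one-step operator `A(y) = Wr[H_k, y]`. -/
def Aone (k : ℕ) (y : ℝ → ℝ) : ℝ → ℝ := fun x => Wr ![H (k : ℤ), y] x

/-- The one-step operator `B(y) = (y' - 2xy)/H_k`. -/
def Bone (k : ℕ) (y : ℝ → ℝ) : ℝ → ℝ := fun x => (deriv y x - 2 * x * y x) / H (k : ℤ) x

lemma Herm_natCast (n : ℕ) : Herm (n : ℤ) = hermN n := by
  simp [Herm]

lemma hermN_deriv : ∀ n : ℕ,
    Polynomial.derivative (hermN (n + 1)) = Polynomial.C (2 * ((n : ℝ) + 1)) * hermN n := by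
  intro n
  induction n using Nat.twoStepInduction with
  | zero => simp [hermN]
  | one =>
      show Polynomial.derivative (hermN 2) = _
      simp only [hermN]
      apply Polynomial.funext
      intro r
      simp
      ring
  | more n ih1 ih2 =>
      show Polynomial.derivative (hermN (n + 3)) = _
      have h3 : hermN (n + 3) = Polynomial.C 2 * Polynomial.X * hermN (n + 2)
          - Polynomial.C (2 * ((n : ℝ) + 1 + 1)) * hermN (n + 1) := by
        show hermN ((n+1) + 2) = _
        rw [hermN]
        push_cast; ring_nf
      have h2 : hermN (n + 2) = Polynomial.C 2 * Polynomial.X * hermN (n + 1)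
          - Polynomial.C (2 * ((n : ℝ) + 1)) * hermN n := by rw [hermN]
      have e1 : Polynomial.derivative (hermN (n + 2)) =
          Polynomial.C (2 * ((n : ℝ) + 2)) * hermN (n + 1) := by
        have := ih2
        rw [show n + 1 + 1 = n + 2 from rfl] at this
        rw [this]
        push_cast; ring_nf
      rw [h3, map_sub, Polynomial.derivative_mul, Polynomial.derivative_mul,
        Polynomial.derivative_C, Polynomial.derivative_X, Polynomial.derivative_mul,
        Polynomial.derivative_C, e1, ih1, h2]
      apply Polynomial.funext
      intro r
      simp
      ring

lemma Herm_deriv (n : ℤ) :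
    Polynomial.derivative (Herm n) = Polynomial.C (2 * (n : ℝ)) * Herm (n - 1) := by
  rcases n with n | n
  · rcases n with _ | m
    · show Polynomial.derivative (Herm ((0 : ℕ) : ℤ)) = _
      rw [Herm_natCast]
      simp [hermN, Herm]
    · show Polynomial.derivative (Herm (((m + 1 : ℕ)) : ℤ)) =
        Polynomial.C (2 * (((m + 1 : ℕ) : ℤ) : ℝ)) * Herm (((m + 1 : ℕ) : ℤ) - 1)
      rw [Herm_natCast,
        show ((((m + 1 : ℕ)) : ℤ) - 1) = ((m : ℕ) : ℤ) by push_cast; ring,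
        Herm_natCast, hermN_deriv]
      push_cast
      ring
  · have h1 : Herm (Int.negSucc n) = 0 := by simp [Herm]
    have h2' : ¬ (0 ≤ Int.negSucc n - 1) := by rw [Int.negSucc_eq]; omega
    have h2 : Herm (Int.negSucc n - 1) = 0 := by simp [Herm, h2']
    rw [h1, h2]
    simp

lemma Herm_rec (n : ℕ) :
    Herm ((n : ℤ) + 1) = Polynomial.C 2 * Polynomial.X * Herm n
      - Polynomial.C (2 * (n : ℝ)) * Herm ((n : ℤ) - 1) := by
  rcases n with _ | m
  · have h0' : ¬ (0 ≤ ((0:ℕ):ℤ) - 1) := by omega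
    have h0 : Herm (((0 : ℕ) : ℤ) - 1) = 0 := by simp [Herm, h0']
    rw [show (((0:ℕ) : ℤ) + 1) = ((1 : ℕ) : ℤ) by norm_num, Herm_natCast, h0, Herm_natCast]
    simp [hermN]
  · rw [show (((m + 1 : ℕ) : ℤ) + 1) = ((m + 2 : ℕ) : ℤ) by push_cast; ring,
      show ((((m + 1 : ℕ)) : ℤ) - 1) = ((m : ℕ) : ℤ) by push_cast; ring,
      Herm_natCast, Herm_natCast, Herm_natCast]
    rw [show m + 2 = m + 2 from rfl, hermN]
    push_cast
    ring

lemma H_hasDerivAt (n j : ℤ) (h : j = n - 1) (x : ℝ) :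
    HasDerivAt (H n) (2 * (n : ℝ) * H j x) x := by
  subst h
  have := (Herm n).hasDerivAt x
  rw [Herm_deriv] at this
  show HasDerivAt (fun x => (Herm n).eval x) (2 * (n : ℝ) * (Herm (n - 1)).eval x) x
  simpa using this

lemma H_deriv_eq (n j : ℤ) (h : j = n - 1) : deriv (H n) = fun x => 2 * (n : ℝ) * H j x := by
  funext x; exact (H_hasDerivAt n j h x).deriv

lemma H_rec (n : ℕ) (i j : ℤ) (hi : i = (n : ℤ) + 1) (hj : j = (n : ℤ) - 1) (x : ℝ) :
    H i x = 2 * x * H (n : ℤ) x - 2 * (n : ℝ) * H j x := by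
  subst hi hj
  simp [H, Herm_rec n]

/-- One-step computation of `B ∘ f ∘ A` with `f = H_(k+1)`. -/
theorem stmt_16 (k : ℕ) (hk : 1 ≤ k)
    (y : ℝ → ℝ) (hy : ContDiff ℝ (⊤ : ℕ∞) y) (x : ℝ) (hx : H (k : ℤ) x ≠ 0) :
    Bone k (fun t => H ((k : ℤ) + 1) t * Aone k y t) x =
      H ((k : ℤ) + 1) x * iteratedDeriv 2 y x - H ((k : ℤ) + 2) x * deriv y x
        + 2 * (k : ℝ) * (H ((k : ℤ) + 1) x - 2 * ((k : ℝ) + 1) * H ((k : ℤ) - 1) x) * y x := by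
  have hy2 : ContDiff ℝ (⊤ : ℕ∞) y := hy.of_le (by simp)
  obtain ⟨hdy, hy'⟩ := contDiff_infty_iff_deriv.mp hy2
  have hdy' : Differentiable ℝ (deriv y) := hy'.differentiable (by simp)
  have hA : Aone k y
      = fun t => H (k : ℤ) t * deriv y t - 2 * (k : ℝ) * (H ((k : ℤ) - 1) t * y t) := by
    funext t
    simp only [Aone, Wr, Matrix.det_fin_two, Matrix.of_apply, Matrix.cons_val_zero,
      Matrix.cons_val_one, Matrix.head_cons, Fin.val_zero, Fin.val_one,
      iteratedDeriv_zero, iteratedDeriv_one]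
    rw [H_deriv_eq (k : ℤ) ((k : ℤ) - 1) rfl]
    push_cast
    ring
  simp only [Bone, hA]
  have h1 := H_hasDerivAt ((k : ℤ) + 1) (k : ℤ) (by ring) x
  have h0 := H_hasDerivAt (k : ℤ) ((k : ℤ) - 1) rfl x
  have hm := H_hasDerivAt ((k : ℤ) - 1) ((k : ℤ) - 2) (by ring) x
  have hyx := (hdy x).hasDerivAt
  have hyx' := (hdy' x).hasDerivAt
  have hG := (h0.mul hyx').sub (((hm.mul hyx).const_mul (2 * (k : ℝ))))
  have hF := h1.mul hG
  have hF' : HasDerivAt (fun t => H ((k : ℤ) + 1) t * (H (k : ℤ) t * deriv y t - 2 * (k : ℝ) * (H ((k : ℤ) - 1) t * y t)))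
      (2 * ((((k : ℤ) + 1 : ℤ)) : ℝ) * H (k : ℤ) x * (H (k : ℤ) x * deriv y x - 2 * (k : ℝ) * (H ((k : ℤ) - 1) x * y x))
        + H ((k : ℤ) + 1) x * (2 * (((k : ℤ)) : ℝ) * H ((k : ℤ) - 1) x * deriv y x + H (k : ℤ) x * deriv (deriv y) x
          - 2 * (k : ℝ) * (2 * ((((k : ℤ) - 1 : ℤ)) : ℝ) * H ((k : ℤ) - 2) x * y x + H ((k : ℤ) - 1) x * deriv y x))) x := hF
  rw [hF'.deriv, div_eq_iff hx, iteratedDeriv_succ, iteratedDeriv_one]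
  have e1 := H_rec (k + 1) ((k : ℤ) + 2) (k : ℤ) (by push_cast; ring) (by push_cast; ring) x
  have e3 : H (k : ℤ) x = 2 * x * H ((k : ℤ) - 1) x - 2 * ((k : ℝ) - 1) * H ((k : ℤ) - 2) x := by
    obtain ⟨m, rfl⟩ : ∃ m, k = m + 1 := ⟨k - 1, (Nat.succ_pred_eq_of_pos hk).symm⟩
    have := H_rec m ((m : ℤ) + 1) ((m : ℤ) - 1) rfl rfl x
    push_cast at this ⊢
    convert this using 4 <;> push_cast <;> ring
  have e1' : ((k + 1 : ℕ) : ℝ) = (k : ℝ) + 1 := by push_cast; ring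
  rw [e1'] at e1
  push_cast at e1 e3 ⊢
  linear_combination (deriv y x * H (k : ℤ) x) * e1
    - (2 * (k : ℝ) * H ((k : ℤ) + 1) x * y x) * e3

end
end
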